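/- arXiv:2308.04513 — 7 statements merged into one kernel-verified Lean document; each statement's English description precedes it below -/
import Mathlib

section
/- If H is an n×n complex Hermitian matrix and H = Σ_{i=1}^n P_i H P_i = Σ_{i=1}^n Q_i H Q_i where the P_i and Q_i are each families of n nonzero self-adjoint pairwise-orthogonal idempotents, then there exists a unitary matrix U with U H U* = H and a permutation σ of {1,...,n} such that U Q_i U* = P_{σ(i)} for all i. -/
open Matrix

variable {n : ℕ}

lemma vmv_conjT (a b : Fin n → ℂ) :
    (vecMulVec a b)ᴴ = vecMulVec (star b) (star a) := by
  ext i j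
  simp [vecMulVec_apply, conjTranspose_apply, mul_comm]

lemma mul_vmv (M : Matrix (Fin n) (Fin n) ℂ) (a b : Fin n → ℂ) :
    M * vecMulVec a b = vecMulVec (M *ᵥ a) b := by
  ext i j
  simp [mul_apply, vecMulVec_apply, mulVec, dotProduct, Finset.sum_mul, mul_assoc]

lemma vmv_mul_vmv (a b c d : Fin n → ℂ) :
    vecMulVec a b * vecMulVec c d = (b ⬝ᵥ c) • vecMulVec a d := by
  ext i j
  simp only [mul_apply, vecMulVec_apply, Matrix.smul_apply, smul_eq_mul, dotProduct, Finset.sum_mul]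
  exact Finset.sum_congr rfl fun k _ => by ring

lemma vmv_mul_mat_mul_vmv (a b c d : Fin n → ℂ) (M : Matrix (Fin n) (Fin n) ℂ) :
    vecMulVec a b * M * vecMulVec c d = (b ⬝ᵥ (M *ᵥ c)) • vecMulVec a d := by
  rw [mul_assoc, mul_vmv, vmv_mul_vmv]

lemma proj_decomp {n : ℕ} (A : Matrix (Fin n) (Fin n) ℂ)
    (hsa : Aᴴ = A) (hid : A * A = A) :
    ∃ (s : Finset (Fin n)) (u : Fin n → Fin n → ℂ),
      (∀ k l, star (u k) ⬝ᵥ u l = if k = l then 1 else 0) ∧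
      A = ∑ k ∈ s, vecMulVec (u k) (star (u k)) ∧
      A.trace = s.card := by
  classical
  have hA : A.IsHermitian := hsa
  set U : Matrix (Fin n) (Fin n) ℂ := (hA.eigenvectorUnitary : Matrix (Fin n) (Fin n) ℂ) with hUdef
  set d : Fin n → ℂ := RCLike.ofReal ∘ hA.eigenvalues with hddef
  have hspec : A = U * diagonal d * star U := hA.spectral_theorem
  have hdiag : star U * A * U = diagonal d := by
    have := hA.conjStarAlgAut_star_eigenvectorUnitary
    simp only [Unitary.conjStarAlgAut_star_apply] at this
    exact this
  have hU1 : U * star U = 1 := mem_unitaryGroup_iff.mp hA.eigenvectorUnitary.2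
  have hU2 : star U * U = 1 := mem_unitaryGroup_iff'.mp hA.eigenvectorUnitary.2
  -- diagonal idempotent
  have hDD : diagonal d * diagonal d = diagonal d := by
    rw [← hdiag]
    calc (star U * A * U) * (star U * A * U)
        = star U * (A * ((U * star U) * A)) * U := by simp only [mul_assoc]
      _ = star U * A * U := by rw [hU1, one_mul, hid]
  have hd01 : ∀ k, d k = 0 ∨ d k = 1 := by
    intro k
    have h := congrFun (congrFun hDD k) k
    simp only [diagonal_mul_diagonal, diagonal_apply_eq] at h
    rcases mul_eq_zero.mp (by linear_combination h : d k * (d k - 1) = 0) with h' | h'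
    · exact Or.inl h'
    · exact Or.inr (by linear_combination h')
  set u : Fin n → Fin n → ℂ := fun k a => U a k with hudef
  have horth : ∀ k l, star (u k) ⬝ᵥ u l = if k = l then 1 else 0 := by
    intro k l
    have h := congrFun (congrFun hU2 k) l
    simpa [mul_apply, dotProduct, Matrix.star_apply, Matrix.one_apply] using h
  have hdecomp : A = ∑ k ∈ Finset.univ.filter (fun k => d k = 1), vecMulVec (u k) (star (u k)) := by
    have hAsum : A = ∑ k, d k • vecMulVec (u k) (star (u k)) := by
      rw [hspec]
      ext i j
      rw [Matrix.sum_apply]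
      simp only [mul_apply, mul_diagonal, Matrix.star_apply, Matrix.smul_apply,
        vecMulVec_apply, smul_eq_mul, Pi.star_apply, diagonal_apply, ite_mul, zero_mul,
        mul_ite, mul_zero, Finset.sum_ite_eq, Finset.sum_ite_eq', Finset.mem_univ, if_true]
      refine Finset.sum_congr rfl fun c _ => by ring
    rw [hAsum, ← Finset.sum_filter_add_sum_filter_not Finset.univ (fun k => d k = 1)]
    have h2 : ∑ k ∈ Finset.univ.filter (fun k => ¬ d k = 1), d k • vecMulVec (u k) (star (u k)) = 0 := by
      apply Finset.sum_eq_zero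
      intro k hk
      rcases hd01 k with h | h
      · rw [h, zero_smul]
      · exact absurd h (Finset.mem_filter.mp hk).2
    rw [h2, add_zero]
    exact Finset.sum_congr rfl fun k hk => by rw [(Finset.mem_filter.mp hk).2, one_smul]
  refine ⟨Finset.univ.filter (fun k => d k = 1), u, horth, hdecomp, ?_⟩
  rw [hdecomp, trace_sum]
  have htr : ∀ k, (vecMulVec (u k) (star (u k))).trace = 1 := by
    intro k
    have h := horth k k
    rw [if_pos rfl] at h
    rw [← h]
    simp [Matrix.trace, Matrix.diag, vecMulVec_apply, dotProduct, mul_comm]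
  simp [htr]

lemma rank_one_family {n : ℕ} (P : Fin n → Matrix (Fin n) (Fin n) ℂ)
    (hPsa : ∀ i, (P i)ᴴ = P i)
    (hPorth : ∀ i j, P i * P j = if i = j then P i else 0)
    (hPne : ∀ i, P i ≠ 0) :
    ∃ v : Fin n → Fin n → ℂ,
      (∀ i j, star (v i) ⬝ᵥ v j = if i = j then 1 else 0) ∧
      (∀ i, P i = vecMulVec (v i) (star (v i))) := by
  classical
  choose s u horth hdec htr using fun i => proj_decomp (P i) (hPsa i) (by simpa using hPorth i i)
  set S := ∑ i, P i with hS
  have hSsa : Sᴴ = S := by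
    rw [hS, conjTranspose_sum]
    exact Finset.sum_congr rfl fun i _ => hPsa i
  have hSid : S * S = S := by
    rw [hS, Finset.sum_mul_sum]
    calc ∑ i, ∑ j, P i * P j
        = ∑ i : Fin n, ∑ j : Fin n, (if i = j then P i else 0) :=
          Finset.sum_congr rfl fun i _ => Finset.sum_congr rfl fun j _ => hPorth i j
      _ = ∑ i, P i := by simp
  obtain ⟨sS, uS, _, _, htrS⟩ := proj_decomp S hSsa hSid
  have htrsum : (∑ i, ((s i).card : ℂ)) = (sS.card : ℂ) := by
    rw [← htrS, hS, trace_sum]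
    exact Finset.sum_congr rfl fun i _ => (htr i).symm
  have hnat : (∑ i, (s i).card) = sS.card := by
    have h : ((∑ i, (s i).card : ℕ) : ℂ) = (sS.card : ℂ) := by push_cast; exact htrsum
    exact_mod_cast h
  have hle : sS.card ≤ n := le_trans (Finset.card_le_univ _) (by simp)
  have hpos : ∀ i, 1 ≤ (s i).card := by
    intro i
    rcases Nat.eq_zero_or_pos (s i).card with h | h
    · exfalso; apply hPne i; rw [hdec i, Finset.card_eq_zero.mp h, Finset.sum_empty]
    · exact h
  have hone : ∀ i, (s i).card = 1 := by
    intro i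
    by_contra hne
    have hlt : (∑ _j : Fin n, 1) < ∑ j, (s j).card :=
      Finset.sum_lt_sum (fun j _ => hpos j) ⟨i, Finset.mem_univ i, by have := hpos i; omega⟩
    simp only [Finset.sum_const, Finset.card_univ, Fintype.card_fin, smul_eq_mul, mul_one] at hlt
    omega
  choose k hk using fun i => Finset.card_eq_one.mp (hone i)
  set v : Fin n → Fin n → ℂ := fun i => u i (k i) with hv
  have hPd : ∀ i, P i = vecMulVec (v i) (star (v i)) := by
    intro i; rw [hdec i, hk i, Finset.sum_singleton]
  have hself : ∀ i, star (v i) ⬝ᵥ v i = 1 := by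
    intro i
    have h := horth i (k i) (k i); rwa [if_pos rfl] at h
  have hvne : ∀ i, ∃ a, v i a ≠ 0 := by
    intro i
    by_contra hall; push_neg at hall
    have h := hself i
    simp [dotProduct, hall] at h
  refine ⟨v, ?_, hPd⟩
  intro i j
  by_cases hij : i = j
  · subst hij; rw [if_pos rfl]; exact hself i
  · rw [if_neg hij]
    have hPP : P i * P j = 0 := by rw [hPorth i j, if_neg hij]
    rw [hPd i, hPd j, vmv_mul_vmv] at hPP
    obtain ⟨a, ha⟩ := hvne i
    obtain ⟨b, hb⟩ := hvne j
    have h := congrFun (congrFun hPP a) b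
    simp only [Matrix.smul_apply, vecMulVec_apply, Matrix.zero_apply, smul_eq_mul,
      Pi.star_apply] at h
    rcases mul_eq_zero.mp h with h' | h'
    · exact h'
    · rcases mul_eq_zero.mp h' with h'' | h''
      · exact absurd h'' ha
      · exact absurd (star_eq_zero.mp h'') hb

open Polynomial


lemma charpoly_unitary_conj {n : ℕ} (V M : Matrix (Fin n) (Fin n) ℂ)
    (h1 : V * Vᴴ = 1) (h2 : Vᴴ * V = 1) :
    (V * M * Vᴴ).charpoly = M.charpoly := by
  classical
  set f := (C : ℂ →+* Polynomial ℂ) with hf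
  have hm1 : V.map f * Vᴴ.map f = 1 := by
    rw [← Matrix.map_mul, h1, Matrix.map_one f (map_zero f) (map_one f)]
  have hm2 : Vᴴ.map f * V.map f = 1 := by
    rw [← Matrix.map_mul, h2, Matrix.map_one f (map_zero f) (map_one f)]
  have hch : charmatrix (V * M * Vᴴ) = V.map f * charmatrix M * Vᴴ.map f := by
    unfold charmatrix
    rw [mul_sub, sub_mul]
    congr 1
    · -- V.map f * scalar X * Vᴴ.map f = scalar X
      have hcomm : V.map f * Matrix.scalar (Fin n) (X : Polynomial ℂ)
          = Matrix.scalar (Fin n) (X : Polynomial ℂ) * V.map f :=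
        (Matrix.scalar_commute (X : Polynomial ℂ) (fun r' => Commute.all _ _) (V.map f)).symm
      rw [hcomm, mul_assoc, hm1, mul_one]
    · simp only [RingHom.mapMatrix_apply]
      rw [← Matrix.map_mul, ← Matrix.map_mul]
  rw [Matrix.charpoly, Matrix.charpoly, hch, det_mul, det_mul]
  have hd : (V.map ⇑f).det * (Vᴴ.map ⇑f).det = 1 := by rw [← det_mul, hm1, det_one]
  calc (V.map ⇑f).det * (charmatrix M).det * (Vᴴ.map ⇑f).det
      = ((V.map ⇑f).det * (Vᴴ.map ⇑f).det) * (charmatrix M).det := by ring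
    _ = (charmatrix M).det := by rw [hd, one_mul]

lemma charpoly_diag {n : ℕ} (d : Fin n → ℂ) :
    (Matrix.diagonal d).charpoly = ∏ i, (X - C (d i)) := by
  classical
  have : charmatrix (Matrix.diagonal d) = Matrix.diagonal (fun i => X - C (d i)) := by
    ext i j
    by_cases h : i = j
    · subst h; simp
    · simp [h, Matrix.diagonal_apply_ne _ h]
  rw [Matrix.charpoly, this, det_diagonal]

lemma exists_perm_of_prod_eq {n : ℕ} (lam mu : Fin n → ℂ)
    (h : ∏ i, (X - C (lam i)) = ∏ i, (X - C (mu i))) :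
    ∃ σ : Equiv.Perm (Fin n), ∀ i, lam (σ i) = mu i := by
  classical
  have key : ∀ (f : Fin n → ℂ),
      (Multiset.map (fun a => X - C a) (Multiset.map f Finset.univ.val)).prod
        = ∏ i, (X - C (f i)) := by
    intro f
    rw [Multiset.map_map, Finset.prod_eq_multiset_prod]
    rfl
  have hms : Multiset.map lam Finset.univ.val = Multiset.map mu Finset.univ.val := by
    rw [← Polynomial.roots_multiset_prod_X_sub_C (Multiset.map lam Finset.univ.val),
        ← Polynomial.roots_multiset_prod_X_sub_C (Multiset.map mu Finset.univ.val), key, key, h]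
  have hcard : ∀ c : ℂ, Fintype.card {i // mu i = c} = Fintype.card {i // lam i = c} := by
    intro c
    have hc := congrArg (Multiset.count c) hms
    rw [Multiset.count_map, Multiset.count_map] at hc
    rw [Fintype.card_subtype, Fintype.card_subtype]
    have e : ∀ (f : Fin n → ℂ),
        (Finset.univ.filter (fun i => f i = c)).card
          = Multiset.card (Multiset.filter (fun a => c = f a) Finset.univ.val) := by
      intro f
      have hfc : Multiset.filter (fun a => c = f a) Finset.univ.val
          = Multiset.filter (fun a => f a = c) Finset.univ.val :=
        Multiset.filter_congr (fun x _ => eq_comm)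
      rw [hfc, Finset.card_def, Finset.filter_val]
    rw [e mu, e lam, hc]
  exact ⟨Equiv.ofFiberEquiv (fun c => Fintype.equivOfCardEq (hcard c)),
    fun i => Equiv.ofFiberEquiv_map _ i⟩
open Matrix in
theorem conjecture_for_complex_matrices (n : ℕ) (H : Matrix (Fin n) (Fin n) ℂ)
    (hH : Hᴴ = H)
    (P Q : Fin n → Matrix (Fin n) (Fin n) ℂ)
    (hPsa : ∀ i, (P i)ᴴ = P i)
    (hPorth : ∀ i j, P i * P j = if i = j then P i else 0)
    (hPne : ∀ i, P i ≠ 0)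
    (hPsum : H = ∑ i, P i * H * P i)
    (hQsa : ∀ i, (Q i)ᴴ = Q i)
    (hQorth : ∀ i j, Q i * Q j = if i = j then Q i else 0)
    (hQne : ∀ i, Q i ≠ 0)
    (hQsum : H = ∑ i, Q i * H * Q i) :
    ∃ (U : Matrix (Fin n) (Fin n) ℂ) (σ : Equiv.Perm (Fin n)),
      Uᴴ * U = 1 ∧ U * Uᴴ = 1 ∧ U * H * Uᴴ = H ∧
      ∀ i, U * Q i * Uᴴ = P (σ i) := by
  classical
  obtain ⟨v, hv, hvP⟩ := rank_one_family P hPsa hPorth hPne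
  obtain ⟨w, hw, hwQ⟩ := rank_one_family Q hQsa hQorth hQne
  set lam : Fin n → ℂ := fun i => star (v i) ⬝ᵥ (H *ᵥ v i) with hlamdef
  set mu : Fin n → ℂ := fun i => star (w i) ⬝ᵥ (H *ᵥ w i) with hmudef
  have hHlam : H = ∑ i, lam i • P i := by
    conv_lhs => rw [hPsum]
    refine Finset.sum_congr rfl fun i _ => ?_
    conv_lhs => rw [hvP i]
    rw [vmv_mul_mat_mul_vmv, ← hvP i]
  have hHmu : H = ∑ i, mu i • Q i := by
    conv_lhs => rw [hQsum]
    refine Finset.sum_congr rfl fun i _ => ?_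
    conv_lhs => rw [hwQ i]
    rw [vmv_mul_mat_mul_vmv, ← hwQ i]
  -- eigenvector matrices
  set V : Matrix (Fin n) (Fin n) ℂ := Matrix.of (fun a i => v i a) with hVdef
  set W : Matrix (Fin n) (Fin n) ℂ := Matrix.of (fun a i => w i a) with hWdef
  have hVu : Vᴴ * V = 1 := by
    ext i j
    have h := hv i j
    simp only [dotProduct, Pi.star_apply] at h
    simp only [mul_apply, conjTranspose_apply, hVdef, Matrix.of_apply, Matrix.one_apply]
    exact h
  have hVu2 : V * Vᴴ = 1 := mul_eq_one_comm.mp hVu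
  have hWu : Wᴴ * W = 1 := by
    ext i j
    have h := hw i j
    simp only [dotProduct, Pi.star_apply] at h
    simp only [mul_apply, conjTranspose_apply, hWdef, Matrix.of_apply, Matrix.one_apply]
    exact h
  have hWu2 : W * Wᴴ = 1 := mul_eq_one_comm.mp hWu
  have hP1 : ∑ i, P i = 1 := by
    ext a b
    rw [← hVu2, Matrix.sum_apply]
    simp only [mul_apply, conjTranspose_apply, hVdef, Matrix.of_apply]
    refine Finset.sum_congr rfl fun i _ => ?_
    rw [hvP i]
    simp [vecMulVec_apply]
  have hQ1 : ∑ i, Q i = 1 := by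
    ext a b
    rw [← hWu2, Matrix.sum_apply]
    simp only [mul_apply, conjTranspose_apply, hWdef, Matrix.of_apply]
    refine Finset.sum_congr rfl fun i _ => ?_
    rw [hwQ i]
    simp [vecMulVec_apply]
  -- H is unitarily diagonalized
  have hHdV : H = V * diagonal lam * Vᴴ := by
    conv_lhs => rw [hHlam]
    ext a b
    rw [Matrix.sum_apply]
    simp only [mul_apply, mul_diagonal, conjTranspose_apply, Matrix.smul_apply, smul_eq_mul,
      hVdef, Matrix.of_apply, diagonal_apply, mul_ite, mul_zero, ite_mul, zero_mul,
      Finset.sum_ite_eq, Finset.sum_ite_eq', Finset.mem_univ, if_true]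
    refine Finset.sum_congr rfl fun i _ => ?_
    rw [hvP i]
    simp only [vecMulVec_apply, Pi.star_apply]
    ring
  have hHdW : H = W * diagonal mu * Wᴴ := by
    conv_lhs => rw [hHmu]
    ext a b
    rw [Matrix.sum_apply]
    simp only [mul_apply, mul_diagonal, conjTranspose_apply, Matrix.smul_apply, smul_eq_mul,
      hWdef, Matrix.of_apply, diagonal_apply, mul_ite, mul_zero, ite_mul, zero_mul,
      Finset.sum_ite_eq, Finset.sum_ite_eq', Finset.mem_univ, if_true]
    refine Finset.sum_congr rfl fun i _ => ?_
    rw [hwQ i]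
    simp only [vecMulVec_apply, Pi.star_apply]
    ring
  have hcp : (∏ i, (Polynomial.X - Polynomial.C (lam i)))
      = ∏ i, (Polynomial.X - Polynomial.C (mu i)) := by
    rw [← charpoly_diag lam, ← charpoly_diag mu,
        ← charpoly_unitary_conj V (diagonal lam) hVu2 hVu,
        ← charpoly_unitary_conj W (diagonal mu) hWu2 hWu, ← hHdV, ← hHdW]
  obtain ⟨σ, hσ⟩ := exists_perm_of_prod_eq lam mu hcp
  set U : Matrix (Fin n) (Fin n) ℂ := ∑ i, vecMulVec (v (σ i)) (star (w i)) with hUdef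
  have hUH : Uᴴ = ∑ i, vecMulVec (w i) (star (v (σ i))) := by
    rw [hUdef, conjTranspose_sum]
    exact Finset.sum_congr rfl fun i _ => by rw [vmv_conjT, star_star]
  have h1 : Uᴴ * U = 1 := by
    rw [hUH, hUdef, Finset.sum_mul_sum]
    calc ∑ i, ∑ j, vecMulVec (w i) (star (v (σ i))) * vecMulVec (v (σ j)) (star (w j))
        = ∑ i : Fin n, ∑ j : Fin n,
            (if i = j then (1 : ℂ) else 0) • vecMulVec (w i) (star (w j)) := by
          refine Finset.sum_congr rfl fun i _ => Finset.sum_congr rfl fun j _ => ?_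
          rw [vmv_mul_vmv, hv (σ i) (σ j)]
          congr 1
          simp [σ.injective.eq_iff]
      _ = ∑ i, vecMulVec (w i) (star (w i)) := by
          refine Finset.sum_congr rfl fun i _ => ?_
          simp [ite_smul]
      _ = 1 := by
          rw [← hQ1]
          exact Finset.sum_congr rfl fun i _ => (hwQ i).symm
  have h2 : U * Uᴴ = 1 := mul_eq_one_comm.mp h1
  have hUQ : ∀ i, U * Q i * Uᴴ = P (σ i) := by
    intro i
    have hstep1 : U * Q i = vecMulVec (v (σ i)) (star (w i)) := by
      rw [hwQ i, hUdef, Finset.sum_mul]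
      calc ∑ j, vecMulVec (v (σ j)) (star (w j)) * vecMulVec (w i) (star (w i))
          = ∑ j : Fin n, (if j = i then (1:ℂ) else 0) • vecMulVec (v (σ j)) (star (w i)) := by
            refine Finset.sum_congr rfl fun j _ => ?_
            rw [vmv_mul_vmv, hw j i]
        _ = vecMulVec (v (σ i)) (star (w i)) := by simp [ite_smul]
    rw [hstep1, hUH, Finset.mul_sum]
    calc ∑ j, vecMulVec (v (σ i)) (star (w i)) * vecMulVec (w j) (star (v (σ j)))
        = ∑ j : Fin n, (if i = j then (1:ℂ) else 0) • vecMulVec (v (σ i)) (star (v (σ j))) := by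
          refine Finset.sum_congr rfl fun j _ => ?_
          rw [vmv_mul_vmv, hw i j]
      _ = vecMulVec (v (σ i)) (star (v (σ i))) := by simp [ite_smul]
      _ = P (σ i) := (hvP (σ i)).symm
  have h3 : U * H * Uᴴ = H := by
    conv_lhs => rw [hHmu]
    rw [Finset.mul_sum, Finset.sum_mul]
    calc ∑ i, U * (mu i • Q i) * Uᴴ
        = ∑ i, mu i • (U * Q i * Uᴴ) := by
          refine Finset.sum_congr rfl fun i _ => ?_
          rw [mul_smul_comm, smul_mul_assoc]
      _ = ∑ i, lam (σ i) • P (σ i) := by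
          refine Finset.sum_congr rfl fun i _ => ?_
          rw [hUQ i, hσ i]
      _ = ∑ i, lam i • P i := Equiv.sum_comp σ (fun i => lam i • P i)
      _ = H := hHlam.symm
  exact ⟨U, σ, h1, h2, h3, hUQ⟩
end

section
/- Every square complex matrix is similar to a complex symmetric matrix. -/
open Polynomial Matrix DirectSum

noncomputable section

lemma exists_pairing (g : ℂ[X]) (hg : g ≠ 0) :
    ∃ B : (ℂ[X] ⧸ (ℂ[X] ∙ g)) →ₗ[ℂ] (ℂ[X] ⧸ (ℂ[X] ∙ g)) →ₗ[ℂ] ℂ,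
      (∀ x y, B x y = B y x) ∧
      (∀ x y, B ((X : ℂ[X]) • x) y = B x ((X : ℂ[X]) • y)) ∧
      (∀ x, (∀ y, B x y = 0) → x = 0) := by
  classical
  set q : ℂ[X] := g * C g.leadingCoeff⁻¹ with hq_def
  have hq : q.Monic := monic_mul_leadingCoeff_inv hg
  have hgq : q ∣ g := by
    refine ⟨C g.leadingCoeff, ?_⟩
    rw [hq_def, mul_assoc, ← C_mul, inv_mul_cancel₀ (leadingCoeff_ne_zero.mpr hg), C_1, mul_one]
  set d := q.natDegree with hd
  set τ : ℂ[X] →ₗ[ℂ] ℂ := (lcoeff ℂ (d-1)).comp (modByMonicHom q) with hτ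
  have hτ0 : ∀ p : ℂ[X], q ∣ p → τ p = 0 := by
    intro p hp
    simp [hτ, modByMonicHom, (modByMonic_eq_zero_iff_dvd hq).mpr hp]
  set N : Submodule ℂ[X] ℂ[X] := ℂ[X] ∙ g with hN
  have hqd : ∀ p : ℂ[X], p ∈ N → q ∣ p := by
    intro p hp
    rw [hN, Submodule.mem_span_singleton] at hp
    obtain ⟨c, rfl⟩ := hp
    exact Dvd.dvd.mul_left (hgq) c
  set N' : Submodule ℂ ℂ[X] := N.restrictScalars ℂ with hN'
  set Bp : ℂ[X] →ₗ[ℂ] ℂ[X] →ₗ[ℂ] ℂ := (LinearMap.mul ℂ ℂ[X]).compr₂ τ with hBp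
  have hBp_apply : ∀ a b : ℂ[X], Bp a b = τ (a * b) := fun a b => rfl
  have hker : ∀ a : ℂ[X], N' ≤ LinearMap.ker (Bp a) := by
    intro a b hb
    have : q ∣ b := hqd b hb
    simp only [LinearMap.mem_ker, hBp_apply]
    exact hτ0 _ (this.mul_left a)
  set L1 : ℂ[X] →ₗ[ℂ] (ℂ[X] ⧸ N') →ₗ[ℂ] ℂ :=
    { toFun := fun a => N'.liftQ (Bp a) (hker a)
      map_add' := by
        intro a b; refine LinearMap.ext fun x => ?_
        obtain ⟨c, rfl⟩ := Submodule.Quotient.mk_surjective N' x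
        simp [hBp_apply, add_mul]
      map_smul' := by
        intro r a; refine LinearMap.ext fun x => ?_
        obtain ⟨c, rfl⟩ := Submodule.Quotient.mk_surjective N' x
        simp [hBp_apply] } with hL1
  have hL1_apply : ∀ a b : ℂ[X], L1 a (Submodule.Quotient.mk b) = τ (a * b) := fun a b => rfl
  have hker2 : N' ≤ LinearMap.ker L1 := by
    intro a ha
    have hqa : q ∣ a := hqd a ha
    simp only [LinearMap.mem_ker]
    refine LinearMap.ext fun x => ?_
    obtain ⟨c, rfl⟩ := Submodule.Quotient.mk_surjective N' x
    simp [hL1_apply, hτ0 _ (hqa.mul_right c)]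
  set F := N'.liftQ L1 hker2 with hF
  set e : (ℂ[X] ⧸ N) ≃ₗ[ℂ] (ℂ[X] ⧸ N') := (Submodule.Quotient.restrictScalarsEquiv ℂ N).symm with he
  have key : ∀ a b : ℂ[X],
      F.compl₁₂ e.toLinearMap e.toLinearMap (Submodule.Quotient.mk a) (Submodule.Quotient.mk b)
        = τ (a * b) := by
    intro a b
    simp only [LinearMap.compl₁₂_apply, LinearEquiv.coe_coe, he,
      Submodule.Quotient.restrictScalarsEquiv_symm_mk, hF, Submodule.liftQ_apply]
    exact hL1_apply a b
  have hmksurj := Submodule.Quotient.mk_surjective N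
  refine ⟨F.compl₁₂ e.toLinearMap e.toLinearMap, ?_, ?_, ?_⟩
  · intro x y
    obtain ⟨a, rfl⟩ := hmksurj x
    obtain ⟨b, rfl⟩ := hmksurj y
    rw [key, key, mul_comm]
  · intro x y
    obtain ⟨a, rfl⟩ := hmksurj x
    obtain ⟨b, rfl⟩ := hmksurj y
    rw [show (X : ℂ[X]) • (Submodule.Quotient.mk a : ℂ[X] ⧸ N) = Submodule.Quotient.mk (X * a) by
        rw [← Submodule.Quotient.mk_smul, smul_eq_mul],
      show (X : ℂ[X]) • (Submodule.Quotient.mk b : ℂ[X] ⧸ N) = Submodule.Quotient.mk (X * b) by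
        rw [← Submodule.Quotient.mk_smul, smul_eq_mul],
      key, key]
    congr 1
    ring
  · intro x hx
    obtain ⟨a, rfl⟩ := hmksurj x
    have hmk : (Submodule.Quotient.mk (a %ₘ q) : ℂ[X] ⧸ N) = Submodule.Quotient.mk a := by
      rw [Submodule.Quotient.eq, hN, Submodule.mem_span_singleton]
      have h3 := modByMonic_add_div a q
      rw [hq_def] at h3
      exact ⟨-(C g.leadingCoeff⁻¹ * (a /ₘ q)), by rw [smul_eq_mul]; linear_combination -h3⟩
    set a' := a %ₘ q with ha'
    by_cases ha0 : a' = 0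
    · rw [← hmk, ha0, Submodule.Quotient.mk_zero]
    · exfalso
      have hdeg : a'.degree < q.degree := degree_modByMonic_lt a hq
      have hk : a'.natDegree < d := natDegree_lt_natDegree ha0 hdeg
      set m := d - 1 - a'.natDegree with hm
      have h2 := hx (Submodule.Quotient.mk (X ^ m))
      rw [← hmk, key] at h2
      have hdeg2 : (a' * X ^ m).degree < q.degree := by
        apply degree_lt_degree
        rw [natDegree_mul ha0 (pow_ne_zero m X_ne_zero), natDegree_X_pow]
        omega
      have hmod : (a' * X ^ m) %ₘ q = a' * X ^ m := (modByMonic_eq_self_iff hq).mpr hdeg2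
      have hco : (a' * X ^ m).coeff (d - 1) = a'.leadingCoeff := by
        rw [show d - 1 = a'.natDegree + m by omega, coeff_mul_X_pow, coeff_natDegree]
      rw [hτ] at h2
      simp only [LinearMap.comp_apply, modByMonicHom, LinearMap.coe_mk, AddHom.coe_mk,
        lcoeff_apply] at h2
      rw [hmod, hco] at h2
      exact leadingCoeff_ne_zero.mpr ha0 h2

lemma exists_symm_G (n : ℕ) (A : Matrix (Fin n) (Fin n) ℂ) :
    ∃ G : Matrix (Fin n) (Fin n) ℂ, IsUnit G ∧ Gᵀ = G ∧ Aᵀ * G = G * A := by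
  classical
  set V := (Fin n → ℂ)
  set f : V →ₗ[ℂ] V := Matrix.toLin' A with hf
  have htor : Module.IsTorsion ℂ[X] (Module.AEval' f) := by
    intro x
    refine ⟨⟨f.charpoly, mem_nonZeroDivisors_of_ne_zero f.charpoly_monic.ne_zero⟩, ?_⟩
    obtain ⟨m, rfl⟩ := (Module.AEval'.of f).surjective x
    show f.charpoly • Module.AEval'.of f m = 0
    rw [← Module.AEval.of_aeval_smul, LinearMap.aeval_self_charpoly]
    simp
  obtain ⟨ι, hfin, p, hp, ex, ⟨Φ⟩⟩ := Module.equiv_directSum_of_isTorsion htor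
  haveI := hfin
  choose Bq hsymm hinv hnondeg using
    fun i : ι => exists_pairing (p i ^ ex i) (pow_ne_zero _ (hp i).ne_zero)
  let Q : ι → Type := fun i => ℂ[X] ⧸ (ℂ[X] ∙ (p i ^ ex i))
  set Φ' : V →ₗ[ℂ] (⨁ i, Q i) :=
    ((Φ.restrictScalars ℂ).toLinearMap.comp (Module.AEval'.of f).toLinearMap) with hΦ'
  set c : ∀ i, (⨁ j, Q j) →ₗ[ℂ] Q i :=
    fun i => (DirectSum.component ℂ[X] ι Q i).restrictScalars ℂ with hc
  set Bfin : V →ₗ[ℂ] V →ₗ[ℂ] ℂ :=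
    ∑ i, (Bq i).compl₁₂ ((c i).comp Φ') ((c i).comp Φ') with hBfin
  have happly : ∀ v w : V, Bfin v w = ∑ i, Bq i (c i (Φ' v)) (c i (Φ' w)) := by
    intro v w
    rw [hBfin]
    simp only [LinearMap.sum_apply, LinearMap.compl₁₂_apply]
    exact Finset.sum_congr rfl fun i _ => rfl
  have hXsmul : ∀ (v : V) i, c i (Φ' (f v)) = (X : ℂ[X]) • c i (Φ' v) := by
    intro v i
    have h1 : Φ' (f v) = (X : ℂ[X]) • Φ' v := by
      simp only [hΦ', LinearMap.comp_apply, LinearEquiv.coe_coe, LinearEquiv.restrictScalars_apply]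
      rw [← Module.AEval'.X_smul_of, _root_.map_smul]
    rw [h1, hc]
    exact (DirectSum.component ℂ[X] ι Q i).map_smul _ _
  -- invariance
  have hBinv : ∀ v w : V, Bfin (f v) w = Bfin v (f w) := by
    intro v w
    rw [happly, happly]
    refine Finset.sum_congr rfl fun i _ => ?_
    rw [hXsmul, hXsmul, hinv]
  -- symmetry
  have hBsymm : ∀ v w : V, Bfin v w = Bfin w v := by
    intro v w
    rw [happly, happly]
    exact Finset.sum_congr rfl fun i _ => hsymm i _ _
  -- nondegenerate
  have hBnd : ∀ v : V, (∀ w : V, Bfin v w = 0) → v = 0 := by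
    intro v hv
    have hcomp : ∀ i, c i (Φ' v) = 0 := by
      intro i
      refine hnondeg i _ fun z => ?_
      have hw := hv ((Module.AEval'.of f).symm (Φ.symm (DirectSum.lof ℂ[X] ι Q i z)))
      rw [happly] at hw
      have hΦ'w : Φ' ((Module.AEval'.of f).symm (Φ.symm (DirectSum.lof ℂ[X] ι Q i z)))
          = DirectSum.lof ℂ[X] ι Q i z := by
        rw [hΦ', LinearMap.comp_apply]
        simp only [LinearEquiv.coe_coe, LinearEquiv.apply_symm_apply,
          LinearEquiv.restrictScalars_apply]
      rw [hΦ'w] at hw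
      rw [Finset.sum_eq_single i] at hw
      · rwa [show (c i) ((DirectSum.lof ℂ[X] ι Q i) z) = z by
          simp [hc, DirectSum.component.lof_self]] at hw
      · intro j _ hj
        have hz : (c j) ((DirectSum.lof ℂ[X] ι Q i) z) = 0 := by
          simp [hc, DirectSum.component.of, Ne.symm hj]
        show ((Bq j) ((c j) (Φ' v))) ((c j) ((DirectSum.lof ℂ[X] ι Q i) z)) = 0
        rw [hz, map_zero]
      · intro h; exact absurd (Finset.mem_univ i) h
    have hΦ'v : Φ' v = 0 := DirectSum.ext fun i => by
      rw [DirectSum.zero_apply]; exact hcomp i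
    rw [hΦ', LinearMap.comp_apply] at hΦ'v
    have h2 : (Module.AEval'.of f) v = 0 :=
      (LinearEquiv.restrictScalars ℂ Φ).map_eq_zero_iff.mp (by exact hΦ'v)
    exact (Module.AEval'.of f).map_eq_zero_iff.mp h2
  set G : Matrix (Fin n) (Fin n) ℂ := LinearMap.toMatrix₂' ℂ Bfin with hG
  refine ⟨G, ?_, ?_, ?_⟩
  · have hnd : G.Nondegenerate := Matrix.SeparatingLeft.nondegenerate (LinearMap.SeparatingLeft.toMatrix₂' hBnd)
    rw [Matrix.nondegenerate_iff_det_ne_zero] at hnd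
    exact (Matrix.isUnit_iff_isUnit_det G).mpr (isUnit_iff_ne_zero.mpr hnd)
  · ext i j
    rw [Matrix.transpose_apply, hG, LinearMap.toMatrix₂'_apply, LinearMap.toMatrix₂'_apply]
    exact hBsymm _ _
  · have hcompl : Bfin.compl₁₂ f LinearMap.id = Bfin.compl₁₂ LinearMap.id f := by
      refine LinearMap.ext fun v => LinearMap.ext fun w => ?_
      simp only [LinearMap.compl₁₂_apply, LinearMap.id_apply]
      exact hBinv v w
    have := congrArg (LinearMap.toMatrix₂' ℂ) hcompl
    rw [LinearMap.toMatrix₂'_compl₁₂, LinearMap.toMatrix₂'_compl₁₂, hf,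
      LinearMap.toMatrix'_toLin', LinearMap.toMatrix'_id, Matrix.transpose_one] at this
    simpa [← hG] using this


lemma exists_factor (m : ℕ) (G : Matrix (Fin m) (Fin m) ℂ) (hu : IsUnit G) (hs : Gᵀ = G) :
    ∃ L : Matrix (Fin m) (Fin m) ℂ, IsUnit L ∧ G = Lᵀ * L := by
  classical
  haveI : Invertible (2 : ℂ) := invertibleOfNonzero (by norm_num)
  set V := (Fin m → ℂ)
  set B : V →ₗ[ℂ] V →ₗ[ℂ] ℂ := Matrix.toLinearMap₂' ℂ G with hB
  have hGsymm : ∀ i j, G j i = G i j := fun i j => (congrFun (congrFun hs j) i).symm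
  have hBapp : ∀ v w : V, B v w = ∑ i, ∑ j, v i * G i j * w j := by
    intro v w
    rw [hB, Matrix.toLinearMap₂'_apply]
    exact Finset.sum_congr rfl fun i _ => Finset.sum_congr rfl fun j _ => by
      simp [smul_eq_mul]; ring
  have hsymm : B.IsSymm := by
    refine ⟨fun v w => ?_⟩
    simp only [RingHom.id_apply]
    rw [hBapp, hBapp, Finset.sum_comm]
    exact Finset.sum_congr rfl fun i _ => Finset.sum_congr rfl fun j _ => by
      rw [hGsymm]; ring
  have hdet : G.det ≠ 0 := by
    intro h
    rw [Matrix.isUnit_iff_isUnit_det, h] at hu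
    simpa using hu
  have hnd : LinearMap.BilinForm.Nondegenerate B := by
    have := LinearMap.separatingLeft_toLinearMap₂'_of_det_ne_zero' (M := G) hdet
    exact hsymm.isRefl.nondegenerate_iff_separatingLeft.mpr (fun x hx => this x hx)
  obtain ⟨v, hv⟩ := LinearMap.BilinForm.exists_orthogonal_basis hsymm
  set b : Module.Basis (Fin m) ℂ V := v.reindex (finCongr (Module.finrank_fin_fun ℂ)) with hb
  have hob : ∀ i j : Fin m, i ≠ j → B (b i) (b j) = 0 := by
    intro i j hij
    rw [hb, Module.Basis.reindex_apply, Module.Basis.reindex_apply]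
    exact hv (fun h => hij (by simpa using congrArg (finCongr (Module.finrank_fin_fun ℂ)) h))
  have hdiag : ∀ i : Fin m, B (b i) (b i) ≠ 0 := by
    intro i
    have h1 : LinearMap.BilinForm.iIsOrtho B b := by
      intro i j hij
      exact hob i j hij
    exact h1.not_isOrtho_basis_self_of_nondegenerate hnd i
  have hsq : ∀ i : Fin m, ∃ s : ℂ, s ≠ 0 ∧ s ^ 2 = B (b i) (b i) := by
    intro i
    obtain ⟨s, hs2⟩ := IsAlgClosed.exists_pow_nat_eq (B (b i) (b i)) (n := 2) (by norm_num)
    exact ⟨s, fun h0 => hdiag i (by rw [← hs2, h0]; ring), hs2⟩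
  choose s hs0 hs2 using hsq
  have hsu : ∀ i, IsUnit ((s i)⁻¹) := fun i => isUnit_iff_ne_zero.mpr (inv_ne_zero (hs0 i))
  set w : Module.Basis (Fin m) ℂ V := b.isUnitSMul hsu with hw
  have hwapp : ∀ i, w i = (s i)⁻¹ • b i := fun i => Module.Basis.isUnitSMul_apply hsu i
  have hortho : ∀ i j : Fin m, B (w i) (w j) = if i = j then 1 else 0 := by
    intro i j
    rw [hwapp, hwapp, LinearMap.map_smul₂, LinearMap.map_smul]
    by_cases hij : i = j
    · subst hij
      rw [if_pos rfl, smul_smul, smul_eq_mul, ← hs2 i, sq]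
      exact div_self (mul_ne_zero (hs0 i) (hs0 i)) ▸ (by field_simp)
    · rw [if_neg hij, hob i j hij]
      simp
  set P : Matrix (Fin m) (Fin m) ℂ := (Pi.basisFun ℂ (Fin m)).toMatrix w with hP
  have hPapp : ∀ i j, P i j = w j i := by
    intro i j
    rw [hP, Module.Basis.toMatrix_apply, Pi.basisFun_repr]
  haveI : Invertible P := (Pi.basisFun ℂ (Fin m)).invertibleToMatrix w
  have hPunit : IsUnit P := isUnit_of_invertible P
  have hPdet : IsUnit P.det := (Matrix.isUnit_iff_isUnit_det P).mp hPunit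
  have hPT : IsUnit Pᵀ.det := by rwa [Matrix.det_transpose]
  have hPGP : Pᵀ * G * P = 1 := by
    ext i j
    rw [Matrix.mul_apply, Matrix.one_apply]
    have : ∑ l, (Pᵀ * G) i l * P l j = B (w i) (w j) := by
      rw [hBapp, Finset.sum_comm]
      refine Finset.sum_congr rfl fun l _ => ?_
      rw [Matrix.mul_apply, Finset.sum_mul]
      refine Finset.sum_congr rfl fun k _ => ?_
      rw [Matrix.transpose_apply, hPapp, hPapp]
    rw [this, hortho]
  refine ⟨P⁻¹, ?_, ?_⟩
  · exact Matrix.isUnit_nonsing_inv_iff.mpr hPunit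
  · have step1 : G = (Pᵀ)⁻¹ * Pᵀ * G * (P * P⁻¹) := by
      rw [Matrix.nonsing_inv_mul _ hPT, Matrix.mul_nonsing_inv _ hPdet, Matrix.one_mul,
        Matrix.mul_one]
    have step2 : (Pᵀ)⁻¹ * Pᵀ * G * (P * P⁻¹) = (Pᵀ)⁻¹ * (Pᵀ * G * P) * P⁻¹ := by
      simp only [Matrix.mul_assoc]
    have step3 : (Pᵀ)⁻¹ * (Pᵀ * G * P) * P⁻¹ = (P⁻¹)ᵀ * P⁻¹ := by
      rw [hPGP, Matrix.mul_one, Matrix.transpose_nonsing_inv]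
    rw [step1, step2, step3]

end

open Matrix in
theorem similar_to_complex_symmetric (n : ℕ) (A : Matrix (Fin n) (Fin n) ℂ) :
    ∃ S : Matrix (Fin n) (Fin n) ℂ, IsUnit S ∧ (S * A * S⁻¹)ᵀ = S * A * S⁻¹ := by
  obtain ⟨G, hGu, hGs, hGc⟩ := exists_symm_G n A
  obtain ⟨L, hLu, hGL⟩ := exists_factor n G hGu hGs
  refine ⟨L, hLu, ?_⟩
  have hLdet : IsUnit L.det := (Matrix.isUnit_iff_isUnit_det L).mp hLu
  have hLT : IsUnit Lᵀ.det := by rwa [Matrix.det_transpose]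
  rw [hGL] at hGc
  have h2 : Aᵀ * Lᵀ = Lᵀ * L * A * L⁻¹ := by
    have h0 : Aᵀ * Lᵀ * (L * L⁻¹) = Lᵀ * L * A * L⁻¹ := by
      rw [← Matrix.mul_assoc]
      rw [show Aᵀ * Lᵀ * L = Lᵀ * L * A from by rw [Matrix.mul_assoc]; exact hGc]
    rwa [Matrix.mul_nonsing_inv _ hLdet, Matrix.mul_one] at h0
  have h3 : (L⁻¹)ᵀ * (Aᵀ * Lᵀ) = L * A * L⁻¹ := by
    rw [h2, Matrix.transpose_nonsing_inv]
    simp only [← Matrix.mul_assoc]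
    rw [Matrix.nonsing_inv_mul _ hLT, Matrix.one_mul]
  rw [Matrix.transpose_mul, Matrix.transpose_mul]
  exact h3
end

section
/- If two complex symmetric matrices are similar, then they are similar via a complex orthogonal matrix (a matrix Q with Qᵀ Q = I). -/
open Polynomial

/-- Hensel lifting: from a square root of `X` mod `r` coprime to `r`,
get square roots mod all powers of `r`. -/
lemma exists_sq_lift (r f0 : Polynomial ℂ) (hdvd : r ∣ f0 ^ 2 - X)
    (hcop : IsCoprime f0 r) (k : ℕ) :
    ∃ g : Polynomial ℂ, r ^ (k + 1) ∣ g ^ 2 - X ∧ IsCoprime g r := by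
  induction k with
  | zero => exact ⟨f0, by simpa using hdvd, hcop⟩
  | succ k ih =>
    obtain ⟨g, hg, hgc⟩ := ih
    have h2u : IsUnit (2 : Polynomial ℂ) := by
      have h22 : ((2 : ℂ[X])) = C (2 : ℂ) := by
        have := map_ofNat (C : ℂ →+* ℂ[X]) 2
        simpa using this.symm
      rw [h22, isUnit_C]; norm_num
    have h2 : IsCoprime (2 * g) r := (isCoprime_mul_unit_left_left h2u g r).2 hgc
    obtain ⟨a, b, hab⟩ := h2
    refine ⟨g - (g ^ 2 - X) * a, ?_, ?_⟩
    · have key : (g - (g ^ 2 - X) * a) ^ 2 - X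
          = (g ^ 2 - X) * (b * r) + (g ^ 2 - X) ^ 2 * a ^ 2 := by
        have h1 : b * r = 1 - a * (2 * g) := by linear_combination hab
        rw [h1]; ring
      rw [key]
      refine dvd_add ?_ ?_
      · rw [pow_succ]
        exact mul_dvd_mul hg ⟨b, mul_comm b r⟩
      · refine Dvd.dvd.mul_right ?_ _
        calc r ^ (k + 1 + 1) ∣ r ^ ((k + 1) * 2) := pow_dvd_pow r (by omega)
          _ = (r ^ (k + 1)) ^ 2 := by rw [pow_mul]
          _ ∣ (g ^ 2 - X) ^ 2 := pow_dvd_pow_of_dvd hg 2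
    · obtain ⟨t, ht⟩ : r ∣ g ^ 2 - X := (dvd_pow_self r (Nat.succ_ne_zero k)).trans hg
      have : g - (g ^ 2 - X) * a = g + r * (-(t * a)) := by rw [ht]; ring
      rw [this]
      exact hgc.add_mul_left_left _
open Polynomial

lemma exists_sq_mod (m : Polynomial ℂ) (h0 : m.eval 0 ≠ 0) :
    ∃ f : Polynomial ℂ, m ∣ f ^ 2 - X := by
  classical
  have hm : m ≠ 0 := fun h => h0 (by simp [h])
  set s : Finset ℂ := m.roots.toFinset with hs
  have hsq : ∀ l : ℂ, ∃ z : ℂ, z ^ 2 = l := fun l =>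
    IsAlgClosed.exists_pow_nat_eq l (n := 2) (by norm_num)
  choose sq hsqr using hsq
  set r : Polynomial ℂ := ∏ l ∈ s, (X - C l) with hr
  set f0 : Polynomial ℂ := Lagrange.interpolate s id (fun l => sq l) with hf0
  have hinj : Set.InjOn (id : ℂ → ℂ) s := Function.injective_id.injOn
  have hroot0 : ∀ l ∈ s, l ≠ 0 := by
    intro l hl hl0
    subst hl0
    apply h0
    have h3 : (0 : ℂ) ∈ m.roots := Multiset.mem_toFinset.1 hl
    exact (Polynomial.mem_roots hm).1 h3
  have heval : ∀ l ∈ s, f0.eval l = sq l := by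
    intro l hl
    exact Lagrange.eval_interpolate_at_node (fun l => sq l) hinj hl
  have hdvd : r ∣ f0 ^ 2 - X := by
    rw [hr]
    refine Finset.prod_dvd_of_coprime ?_ ?_
    · exact (Polynomial.pairwise_coprime_X_sub_C Function.injective_id).set_pairwise _
    · intro l hl
      rw [Polynomial.dvd_iff_isRoot]
      simp [Polynomial.IsRoot, heval l hl, hsqr]
  have hcop : IsCoprime f0 r := by
    rw [hr]
    refine IsCoprime.prod_right fun l hl => ?_
    rw [isCoprime_comm]
    refine ((Polynomial.prime_X_sub_C l).coprime_iff_not_dvd).2 ?_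
    rw [Polynomial.dvd_iff_isRoot]
    intro hroot
    have hne : sq l ≠ 0 := fun h => hroot0 l hl (by rw [← hsqr l, h]; ring)
    exact hne (by rw [← heval l hl]; exact hroot)
  obtain ⟨g, hg, -⟩ := exists_sq_lift r f0 hdvd hcop m.natDegree
  refine ⟨g, dvd_trans ?_ hg⟩
  -- m ∣ r ^ (natDegree + 1)
  have hsplit : Splits m := IsAlgClosed.splits m
  have heqm := hsplit.eq_prod_roots
  have hprod : (m.roots.map fun a => X - C a).prod ∣ r ^ (m.natDegree + 1) := by
    rw [Finset.prod_multiset_map_count, hr, ← Finset.prod_pow]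
    refine Finset.prod_dvd_prod_of_dvd _ _ fun a ha => ?_
    refine pow_dvd_pow _ ?_
    calc m.roots.count a ≤ Multiset.card m.roots := Multiset.count_le_card _ _
      _ ≤ m.natDegree := Polynomial.card_roots' m
      _ ≤ m.natDegree + 1 := Nat.le_succ _
  have hu : IsUnit (C m.leadingCoeff) :=
    Polynomial.isUnit_C.2 (Polynomial.leadingCoeff_ne_zero.2 hm).isUnit
  nth_rewrite 1 [heqm]
  exact (hu.mul_left_dvd).2 hprod

open Matrix in
theorem similar_symmetric_implies_orthogonally_similar (n : ℕ)
    (A B : Matrix (Fin n) (Fin n) ℂ) (hA : Aᵀ = A) (hB : Bᵀ = B)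
    (h : ∃ S : Matrix (Fin n) (Fin n) ℂ, IsUnit S ∧ S * A * S⁻¹ = B) :
    ∃ Q : Matrix (Fin n) (Fin n) ℂ, Qᵀ * Q = 1 ∧ Q * A * Qᵀ = B := by
  obtain ⟨S, hS, hSB⟩ := h
  have hSd : IsUnit S.det := (Matrix.isUnit_iff_isUnit_det S).1 hS
  have hStd : IsUnit Sᵀ.det := by rwa [Matrix.det_transpose]
  set P := Sᵀ * S with hP
  have hPt : Pᵀ = P := by rw [hP, Matrix.transpose_mul, Matrix.transpose_transpose]
  have hPd : IsUnit P.det := by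
    rw [hP, Matrix.det_mul, Matrix.det_transpose]; exact hSd.mul hSd
  have hinvS : S⁻¹ * S = 1 := Matrix.nonsing_inv_mul S hSd
  have hStinv : Sᵀ * Sᵀ⁻¹ = 1 := Matrix.mul_nonsing_inv Sᵀ hStd
  have hBt : (S * A * S⁻¹)ᵀ = S * A * S⁻¹ := by rw [hSB]; exact hB
  have h1 : (S * A * S⁻¹)ᵀ = Sᵀ⁻¹ * A * Sᵀ := by
    rw [Matrix.transpose_mul, Matrix.transpose_mul, Matrix.transpose_nonsing_inv, hA,
      Matrix.mul_assoc]
  have h2 : Sᵀ⁻¹ * A * Sᵀ = S * A * S⁻¹ := by rw [← h1]; exact hBt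
  have hcomm : P * A = A * P := by
    have e1 : Sᵀ * (S * A * S⁻¹) * S = P * A := by
      rw [show Sᵀ * (S * A * S⁻¹) * S = Sᵀ * S * A * (S⁻¹ * S) from by
        simp [Matrix.mul_assoc], hinvS, Matrix.mul_one, hP]
    have e2 : Sᵀ * (Sᵀ⁻¹ * A * Sᵀ) * S = A * P := by
      rw [show Sᵀ * (Sᵀ⁻¹ * A * Sᵀ) * S = (Sᵀ * Sᵀ⁻¹) * (A * (Sᵀ * S)) from by
        simp [Matrix.mul_assoc], hStinv, Matrix.one_mul, hP]
    calc P * A = Sᵀ * (S * A * S⁻¹) * S := e1.symm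
      _ = Sᵀ * (Sᵀ⁻¹ * A * Sᵀ) * S := by rw [h2]
      _ = A * P := e2
  have h0 : (P.charpoly).eval 0 ≠ 0 := by
    intro hev
    rw [← Polynomial.coeff_zero_eq_eval_zero] at hev
    have hc := Matrix.det_eq_sign_charpoly_coeff P
    rw [hev, mul_zero] at hc
    rw [hc] at hPd
    simp at hPd
  obtain ⟨f, hf⟩ := exists_sq_mod P.charpoly h0
  set W : Matrix (Fin n) (Fin n) ℂ := Polynomial.aeval P f with hWdef
  have hW2 : W * W = P := by
    obtain ⟨q, hq⟩ := hf
    have h3 := congrArg (Polynomial.aeval P) hq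
    simp only [map_sub, map_pow, _root_.map_mul, Polynomial.aeval_X,
      Matrix.aeval_self_charpoly, zero_mul] at h3
    have h4 : W ^ 2 = P := sub_eq_zero.1 h3
    rw [← h4, pow_two]
  have hsum := Polynomial.aeval_eq_sum_range (p := f) P
  have hWt : Wᵀ = W := by
    rw [hWdef, hsum, Matrix.transpose_sum]
    refine Finset.sum_congr rfl fun i _ => ?_
    rw [Matrix.transpose_smul, Matrix.transpose_pow, hPt]
  have hAW : A * W = W * A := by
    have hc : Commute A P := hcomm.symm
    have : Commute A W := by
      rw [hWdef, hsum]
      exact Commute.sum_right _ _ _ fun i _ => (hc.pow_right i).smul_right _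
    exact this
  have hWd : IsUnit W.det := by
    have hdet : W.det * W.det = P.det := by rw [← Matrix.det_mul, hW2]
    rw [← hdet] at hPd
    exact isUnit_of_mul_isUnit_left hPd
  have hWinv : W * W⁻¹ = 1 := Matrix.mul_nonsing_inv W hWd
  have hWinv' : W⁻¹ * W = 1 := Matrix.nonsing_inv_mul W hWd
  have hWit : (W⁻¹)ᵀ = W⁻¹ := by rw [Matrix.transpose_nonsing_inv, hWt]
  have hAWinv : W⁻¹ * A = A * W⁻¹ := by
    calc W⁻¹ * A = W⁻¹ * A * (W * W⁻¹) := by rw [hWinv, Matrix.mul_one]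
      _ = W⁻¹ * (A * W) * W⁻¹ := by simp [Matrix.mul_assoc]
      _ = W⁻¹ * (W * A) * W⁻¹ := by rw [hAW]
      _ = (W⁻¹ * W) * (A * W⁻¹) := by simp [Matrix.mul_assoc]
      _ = A * W⁻¹ := by rw [hWinv', Matrix.one_mul]
  have hPinv2 : W⁻¹ * W⁻¹ = P⁻¹ := by rw [← hW2, Matrix.mul_inv_rev]
  have hPinv : P⁻¹ = S⁻¹ * Sᵀ⁻¹ := by rw [hP, Matrix.mul_inv_rev]
  refine ⟨S * W⁻¹, ?_, ?_⟩
  · rw [Matrix.transpose_mul, hWit]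
    calc W⁻¹ * Sᵀ * (S * W⁻¹) = W⁻¹ * (Sᵀ * S) * W⁻¹ := by simp [Matrix.mul_assoc]
      _ = W⁻¹ * (W * W) * W⁻¹ := by rw [← hP, ← hW2]
      _ = (W⁻¹ * W) * (W * W⁻¹) := by simp [Matrix.mul_assoc]
      _ = 1 := by rw [hWinv', hWinv, Matrix.one_mul]
  · rw [Matrix.transpose_mul, hWit]
    calc S * W⁻¹ * A * (W⁻¹ * Sᵀ)
        = S * (W⁻¹ * A) * (W⁻¹ * Sᵀ) := by simp [Matrix.mul_assoc]
      _ = S * (A * W⁻¹) * (W⁻¹ * Sᵀ) := by rw [hAWinv]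
      _ = S * A * (W⁻¹ * W⁻¹) * Sᵀ := by simp [Matrix.mul_assoc]
      _ = S * A * (S⁻¹ * Sᵀ⁻¹) * Sᵀ := by rw [hPinv2, hPinv]
      _ = S * A * S⁻¹ * (Sᵀ⁻¹ * Sᵀ) := by simp [Matrix.mul_assoc]
      _ = B := by rw [Matrix.nonsing_inv_mul Sᵀ hStd, Matrix.mul_one, hSB]
end

section
/- Every invertible complex matrix S admits a decomposition S = Q P where Q is complex orthogonal (Qᵀ Q = I) and P is complex symmetric (P = Pᵀ) with P a polynomial in Sᵀ S. -/
open Polynomial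

/-- Newton iteration: square root of `X` modulo `(X - C (μ^2))^(k+1)`. -/
lemma local_sqrt_aux (μ : ℂ) (hμ : μ ≠ 0) (k : ℕ) :
    ∃ q : ℂ[X], (X - C (μ^2))^(k+1) ∣ q^2 - X ∧ (X - C (μ^2)) ∣ q - C μ := by
  induction k with
  | zero =>
    refine ⟨C μ, ⟨-1, ?_⟩, by simp⟩
    rw [pow_one, map_pow]; ring
  | succ k ih =>
    obtain ⟨q, ⟨a, ha⟩, ⟨b, hb⟩⟩ := ih
    set e : ℂ := (2*μ)⁻¹ with he
    have h2μ : (2:ℂ) * μ ≠ 0 := by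
      simp [hμ]
    have h1 : (2:ℂ) * μ * e = 1 := mul_inv_cancel₀ h2μ
    have he' : (2 : ℂ[X]) * C μ * C e = 1 := by
      rw [show (2:ℂ[X]) = C 2 from (map_ofNat C 2).symm, ← C_mul, ← C_mul, h1, C_1]
    refine ⟨q - (q^2 - X) * C e,
      ⟨C e^2 * (X - C (μ^2))^k * a^2 - 2 * C e * a * b, ?_⟩,
      ⟨b - (X - C (μ^2))^k * a * C e, ?_⟩⟩
    · linear_combination (C e^2*((q^2-X) + (X - C (μ^2))^(k+1)*a)
        - 2*C e*(X - C (μ^2))*b) * ha - 2*C e*(q^2-X) * hb - (q^2-X) * he'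
    · linear_combination hb - C e * ha

lemma local_sqrt (μ : ℂ) (hμ : μ ≠ 0) (k : ℕ) :
    ∃ q : ℂ[X], (X - C (μ^2))^k ∣ q^2 - X := by
  cases k with
  | zero => exact ⟨0, by simp⟩
  | succ k => obtain ⟨q, h, -⟩ := local_sqrt_aux μ hμ k; exact ⟨q, h⟩

/-- Glue local square roots of `X` along pairwise coprime factors. -/
lemma sqrt_mod_prod (s : Finset ℂ) (hs : ∀ x ∈ s, x ≠ 0) (k : ℂ → ℕ) :
    ∃ p : ℂ[X], (∏ x ∈ s, (X - C x)^(k x)) ∣ p^2 - X := by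
  classical
  induction s using Finset.induction_on with
  | empty => exact ⟨0, by simp⟩
  | @insert a s ha ih =>
    obtain ⟨p, hp⟩ := ih (fun x hx => hs x (Finset.mem_insert_of_mem hx))
    have ha0 : a ≠ 0 := hs a (Finset.mem_insert_self a s)
    obtain ⟨μ, hμa⟩ := IsAlgClosed.exists_pow_nat_eq a (n := 2) (by norm_num)
    have hμ : μ ≠ 0 := by rintro rfl; exact ha0 (by simpa using hμa.symm)
    obtain ⟨q, hq⟩ := local_sqrt μ hμ (k a)
    rw [hμa] at hq
    have hcop : IsCoprime ((X - C a)^(k a)) (∏ x ∈ s, (X - C x)^(k x)) :=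
      IsCoprime.prod_right fun x hx =>
        (isCoprime_X_sub_C_of_isUnit_sub
          ((sub_ne_zero.2 (by rintro rfl; exact ha hx)).isUnit)).pow
    obtain ⟨u, v, huv⟩ := id hcop
    set f : ℂ[X] := (X - C a)^(k a)
    set g : ℂ[X] := ∏ x ∈ s, (X - C x)^(k x)
    refine ⟨q * v * g + p * u * f, ?_⟩
    rw [Finset.prod_insert ha]
    refine hcop.mul_dvd ?_ ?_
    · have h1 : f ∣ (q * v * g + p * u * f) - q := ⟨(p - q) * u, by linear_combination q * huv⟩
      have h2 : (q * v * g + p * u * f)^2 - X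
          = ((q * v * g + p * u * f) - q) * ((q * v * g + p * u * f) + q) + (q^2 - X) := by
        ring
      rw [h2]; exact dvd_add (h1.mul_right _) hq
    · have h1 : g ∣ (q * v * g + p * u * f) - p := ⟨(q - p) * v, by linear_combination p * huv⟩
      have h2 : (q * v * g + p * u * f)^2 - X
          = ((q * v * g + p * u * f) - p) * ((q * v * g + p * u * f) + p) + (p^2 - X) := by
        ring
      rw [h2]; exact dvd_add (h1.mul_right _) hp

open Matrix in
lemma aeval_transpose_eq {n : ℕ} (A : Matrix (Fin n) (Fin n) ℂ) (p : ℂ[X]) :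
    (Polynomial.aeval A p)ᵀ = Polynomial.aeval Aᵀ p := by
  induction p using Polynomial.induction_on' with
  | add p q hp hq => simp [hp, hq]
  | monomial k c =>
    simp [aeval_monomial, Algebra.algebraMap_eq_smul_one, smul_mul_assoc, one_mul,
      transpose_smul, transpose_pow]

open Matrix in
theorem transpose_polar_decomposition (n : ℕ) (S : Matrix (Fin n) (Fin n) ℂ)
    (hS : IsUnit S) :
    ∃ (Q P : Matrix (Fin n) (Fin n) ℂ) (p : Polynomial ℂ),
      Qᵀ * Q = 1 ∧ Pᵀ = P ∧ P = Polynomial.aeval (Sᵀ * S) p ∧ S = Q * P := by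
  classical
  have hSdet : IsUnit S.det := (Matrix.isUnit_iff_isUnit_det S).1 hS
  have hAdet : IsUnit (Sᵀ * S).det := by
    rw [Matrix.det_mul, Matrix.det_transpose]; exact hSdet.mul hSdet
  set A : Matrix (Fin n) (Fin n) ℂ := Sᵀ * S with hA
  -- the characteristic polynomial factors over its (nonzero) roots
  have hmon := A.charpoly_monic
  have hfact : A.charpoly
      = ∏ x ∈ A.charpoly.roots.toFinset, (X - C x) ^ (A.charpoly.roots.count x) := by
    conv_lhs => rw [(IsAlgClosed.splits A.charpoly).eq_prod_roots_of_monic hmon]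
    exact Finset.prod_multiset_map_count _ _
  have hroots : ∀ x ∈ A.charpoly.roots.toFinset, x ≠ 0 := by
    rintro x hx rfl
    have h0 : A.charpoly.IsRoot 0 :=
      isRoot_of_mem_roots (Multiset.mem_toFinset.1 hx)
    have hc0 : A.charpoly.coeff 0 = 0 := by
      rw [coeff_zero_eq_eval_zero]; exact h0
    have : A.det = 0 := by
      rw [Matrix.det_eq_sign_charpoly_coeff, hc0, mul_zero]
    rw [this] at hAdet
    exact (by simp : ¬ IsUnit (0:ℂ)) hAdet
  obtain ⟨p, hdvd⟩ := sqrt_mod_prod _ hroots (fun x => A.charpoly.roots.count x)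
  rw [← hfact] at hdvd
  obtain ⟨c, hc⟩ := hdvd
  set P : Matrix (Fin n) (Fin n) ℂ := Polynomial.aeval A p with hPdef
  have hP2 : P * P = A := by
    have := congrArg (Polynomial.aeval A) hc
    simp only [map_sub, map_pow, _root_.map_mul, aeval_X, Matrix.aeval_self_charpoly,
      zero_mul] at this
    have h' : P ^ 2 - A = 0 := this
    calc P * P = P ^ 2 := (sq P).symm
    _ = A := by rw [← sub_eq_zero]; exact h'
  have hAt : Aᵀ = A := by rw [hA, transpose_mul, transpose_transpose]
  have hPt : Pᵀ = P := by rw [hPdef, aeval_transpose_eq, hAt]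
  have hPdet : IsUnit P.det := by
    have := congrArg Matrix.det hP2
    rw [Matrix.det_mul] at this
    rw [← this] at hAdet
    exact isUnit_of_mul_isUnit_left hAdet
  refine ⟨S * P⁻¹, P, p, ?_, hPt, rfl, ?_⟩
  · rw [transpose_mul, transpose_nonsing_inv, hPt, Matrix.mul_assoc,
      ← Matrix.mul_assoc Sᵀ S P⁻¹, ← hA, ← hP2, Matrix.mul_assoc P P P⁻¹,
      Matrix.mul_nonsing_inv P hPdet, Matrix.mul_one, Matrix.nonsing_inv_mul P hPdet]
  · rw [Matrix.mul_assoc, Matrix.nonsing_inv_mul P hPdet, Matrix.mul_one]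
end

section
/- Every invertible complex matrix M has a square root which is a polynomial in M with complex coefficients. -/
open Polynomial

/-- If `f` divides `p^2 - X` and `f(0) ≠ 0`, then `f` and `p` are coprime. -/
lemma coprime_of_dvd_sq_sub_X {f p : ℂ[X]} (h : f ∣ p ^ 2 - X) (h0 : f.eval 0 ≠ 0) :
    IsCoprime f p := by
  classical
  rw [← EuclideanDomain.gcd_isUnit_iff]
  by_contra hu
  have hf0 : f ≠ 0 := fun hf => h0 (by simp [hf])
  have hg0 : EuclideanDomain.gcd f p ≠ 0 := fun hg =>
    hf0 ((EuclideanDomain.gcd_eq_zero_iff).mp hg).1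
  have hdeg : (EuclideanDomain.gcd f p).degree ≠ 0 :=
    (degree_pos_of_ne_zero_of_nonunit hg0 hu).ne'
  obtain ⟨z, hz⟩ := Complex.isAlgClosed.exists_root _ hdeg
  have hfz : f.eval z = 0 :=
    eval_eq_zero_of_dvd_of_eval_eq_zero (EuclideanDomain.gcd_dvd_left f p) hz
  have hpz : p.eval z = 0 :=
    eval_eq_zero_of_dvd_of_eval_eq_zero (EuclideanDomain.gcd_dvd_right f p) hz
  have hq : (p ^ 2 - X).eval z = 0 := eval_eq_zero_of_dvd_of_eval_eq_zero h hfz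
  have hz0 : z = 0 := by
    have : p.eval z ^ 2 - z = 0 := by simpa using hq
    rw [hpz] at this; simpa using this.symm
  rw [hz0] at hfz
  exact h0 hfz

/-- Hensel lifting for square roots of `X` modulo powers of `f`. -/
lemma lift_sqrt (f : ℂ[X]) (h0 : f.eval 0 ≠ 0) (hb : ∃ p, f ∣ p ^ 2 - X) (e : ℕ) :
    ∃ p : ℂ[X], f ^ e ∣ p ^ 2 - X := by
  induction e with
  | zero => exact ⟨0, by simp⟩
  | succ e ih =>
    rcases Nat.eq_zero_or_pos e with rfl | he
    · simpa using hb
    obtain ⟨p, r, hr⟩ := ih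
    have hco : IsCoprime f p :=
      coprime_of_dvd_sq_sub_X (dvd_trans (dvd_pow_self f he.ne') ⟨r, hr⟩) h0
    obtain ⟨a, b, hab⟩ := hco
    set t : ℂ[X] := -(C (1/2 : ℂ) * (b * r)) with ht
    have h2 : (2 : ℂ[X]) * C (1/2 : ℂ) = 1 := by
      rw [← map_ofNat C 2, ← C_mul, ← C_1]; norm_num
    refine ⟨p + t * f ^ e, ?_⟩
    have key : (p + t * f ^ e) ^ 2 - X = f ^ (e + 1) * (r * a) + t ^ 2 * f ^ (2 * e) := by
      rw [ht]
      ring_nf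
      linear_combination hr - (f ^ e * r) * hab - (f ^ e * r * b * p) * h2
    rw [key]
    exact dvd_add (dvd_mul_right _ _)
      (Dvd.dvd.mul_left (pow_dvd_pow f (by omega)) _)

theorem invertible_matrix_has_polynomial_sqrt (n : ℕ)
    (M : Matrix (Fin n) (Fin n) ℂ) (hM : IsUnit M) :
    ∃ p : Polynomial ℂ, Polynomial.aeval M p * Polynomial.aeval M p = M := by
  classical
  set χ : ℂ[X] := M.charpoly with hχ
  have hmonic : χ.Monic := M.charpoly_monic
  have hχ0 : χ ≠ 0 := hmonic.ne_zero
  -- eval 0 χ ≠ 0 since det M ≠ 0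
  have hdet : M.det ≠ 0 := by
    have := (Matrix.isUnit_iff_isUnit_det M).mp hM
    exact this.ne_zero
  have heval0 : χ.eval 0 ≠ 0 := by
    intro h
    apply hdet
    rw [Matrix.det_eq_sign_charpoly_coeff, coeff_zero_eq_eval_zero, ← hχ, h, mul_zero]
  set s : Finset ℂ := χ.roots.toFinset with hs
  set f : ℂ[X] := ∏ l ∈ s, (X - C l) with hf
  -- roots of χ are nonzero
  have hroot_ne : ∀ l ∈ s, l ≠ 0 := by
    intro l hl hl0
    have : χ.eval l = 0 := by
      have := Multiset.mem_toFinset.mp hl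
      exact (isRoot_of_mem_roots this)
    rw [hl0] at this; exact heval0 this
  have hfeval0 : f.eval 0 ≠ 0 := by
    rw [hf, eval_prod]
    rw [Finset.prod_ne_zero_iff]
    intro l hl
    simp only [eval_sub, eval_X, eval_C, zero_sub, neg_ne_zero]
    exact hroot_ne l hl
  -- base: interpolation polynomial whose values at roots are square roots
  have sqfun : ∀ x : ℂ, ∃ y : ℂ, y ^ 2 = x := fun x =>
    IsAlgClosed.exists_pow_nat_eq x two_pos
  choose sq hsq using sqfun
  set p₀ : ℂ[X] := Lagrange.interpolate s id sq with hp₀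
  have hbase : f ∣ p₀ ^ 2 - X := by
    have hq0 : p₀ ^ 2 - X ≠ 0 := by
      intro h
      have h' : p₀ ^ 2 = X := by linear_combination h
      have := congrArg natDegree h'
      rw [natDegree_pow, natDegree_X] at this
      omega
    have hroots : ∀ l ∈ s, (p₀ ^ 2 - X).IsRoot l := by
      intro l hl
      have : p₀.eval l = sq l := Lagrange.eval_interpolate_at_node sq (Set.injOn_id _) hl
      simp [IsRoot, this, hsq l]
    have hle : s.val ≤ (p₀ ^ 2 - X).roots := by
      rw [Multiset.le_iff_count]
      intro a
      by_cases ha : a ∈ s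
      · have h1 : s.val.count a = 1 := Multiset.count_eq_one_of_mem s.nodup ha
        rw [h1, count_roots]
        exact (rootMultiplicity_pos hq0).mpr (hroots a ha)
      · simp [Multiset.count_eq_zero_of_notMem (by exact ha)]
    calc f = (s.val.map fun a => X - C a).prod := by
            rw [hf]; rfl
      _ ∣ ((p₀ ^ 2 - X).roots.map fun a => X - C a).prod :=
            Multiset.prod_dvd_prod_of_le (Multiset.map_le_map hle)
      _ ∣ p₀ ^ 2 - X := by clear_value p₀; exact prod_multiset_X_sub_C_dvd _
  -- χ divides f ^ N
  set N : ℕ := χ.natDegree with hN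
  have hχdvd : χ ∣ f ^ N := by
    have hsplit : χ = (χ.roots.map fun a => X - C a).prod :=
      (IsAlgClosed.splits χ).eq_prod_roots_of_monic hmonic
    have hle : χ.roots ≤ N • s.val := by
      rw [Multiset.le_iff_count]
      intro a
      rw [Multiset.count_nsmul]
      by_cases ha : a ∈ χ.roots
      · have h1 : s.val.count a = 1 :=
          Multiset.count_eq_one_of_mem s.nodup (Multiset.mem_toFinset.mpr ha)
        rw [h1, mul_one]
        exact le_trans (Multiset.count_le_card a _) (card_roots' χ)
      · simp [Multiset.count_eq_zero_of_notMem ha]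
    have : (χ.roots.map fun a => X - C a).prod ∣ ((N • s.val).map fun a => X - C a).prod :=
      Multiset.prod_dvd_prod_of_le (Multiset.map_le_map hle)
    rw [← hsplit] at this
    have heq : ((N • s.val).map fun a => X - C a).prod = f ^ N := by
      rw [Multiset.map_nsmul, Multiset.prod_nsmul]
      rfl
    rwa [heq] at this
  obtain ⟨p, hp⟩ := lift_sqrt f hfeval0 ⟨p₀, hbase⟩ N
  have hχp : χ ∣ p ^ 2 - X := hχdvd.trans hp
  obtain ⟨c, hc⟩ := hχp
  refine ⟨p, ?_⟩
  have : (aeval M) (p ^ 2 - X) = 0 := by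
    rw [hc, map_mul, hχ, Matrix.aeval_self_charpoly, zero_mul]
  rw [map_sub, map_pow, aeval_X, sub_eq_zero] at this
  rw [pow_two] at this
  exact this
end

section
/- Perturbative spectral theorem over dual numbers: let H, H' be real symmetric n×n matrices. Then there exist ε-dependent families: a matrix U(ε) = U₀ + ε U₁ with U₀ orthogonal and U₀ᵀ U₁ + U₁ᵀ U₀ = 0, and a diagonal-plus-ε-block-diagonal matrix D(ε) = D₀ + ε D₁ with D₀ diagonal and D₁ symmetric block diagonal (blocks matching the repeated eigenvalues of D₀), such that H + ε H' = U(ε) D(ε) U(ε)ᵀ when computing modulo ε². -/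
open Matrix in
theorem perturbative_spectral_theorem (n : ℕ) (H H' : Matrix (Fin n) (Fin n) ℝ)
    (hH : Hᵀ = H) (hH' : H'ᵀ = H') :
    ∃ (U₀ U₁ : Matrix (Fin n) (Fin n) ℝ) (d : Fin n → ℝ)
      (D₁ : Matrix (Fin n) (Fin n) ℝ),
      U₀ᵀ * U₀ = 1 ∧ U₀ * U₀ᵀ = 1 ∧
      U₀ᵀ * U₁ + U₁ᵀ * U₀ = 0 ∧
      D₁ᵀ = D₁ ∧
      (∀ i j, d i ≠ d j → D₁ i j = 0) ∧
      H = U₀ * Matrix.diagonal d * U₀ᵀ ∧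
      H' = U₁ * Matrix.diagonal d * U₀ᵀ + U₀ * D₁ * U₀ᵀ +
        U₀ * Matrix.diagonal d * U₁ᵀ := by
  have hHH : H.IsHermitian := by rwa [Matrix.IsHermitian, conjTranspose_eq_transpose_of_trivial]
  set U₀ : Matrix (Fin n) (Fin n) ℝ := (hHH.eigenvectorUnitary : Matrix (Fin n) (Fin n) ℝ)
  set d : Fin n → ℝ := hHH.eigenvalues
  have hU1 : U₀ᵀ * U₀ = 1 := by
    have := (Matrix.mem_unitaryGroup_iff').mp hHH.eigenvectorUnitary.2
    rwa [← conjTranspose_eq_transpose_of_trivial]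
  have hU2 : U₀ * U₀ᵀ = 1 := by
    have := (Matrix.mem_unitaryGroup_iff).mp hHH.eigenvectorUnitary.2
    rwa [← conjTranspose_eq_transpose_of_trivial]
  have hspec : H = U₀ * Matrix.diagonal d * U₀ᵀ := by
    have := hHH.spectral_theorem
    simpa [Matrix.star_eq_conjTranspose, conjTranspose_eq_transpose_of_trivial] using this
  -- K = U₀ᵀ H' U₀ is symmetric
  set K : Matrix (Fin n) (Fin n) ℝ := U₀ᵀ * H' * U₀ with hK
  have hKsym : Kᵀ = K := by
    rw [hK, transpose_mul, transpose_mul, transpose_transpose, hH', mul_assoc]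
  set X : Matrix (Fin n) (Fin n) ℝ :=
    Matrix.of fun i j => if d i = d j then 0 else K i j / (d j - d i) with hX
  set D₁ : Matrix (Fin n) (Fin n) ℝ :=
    Matrix.of fun i j => if d i = d j then K i j else 0 with hD₁
  have hKs : ∀ i j, K j i = K i j := fun i j => by conv_lhs => rw [← hKsym, transpose_apply]
  have hXanti : Xᵀ = -X := by
    ext i j
    simp only [hX, transpose_apply, of_apply, Matrix.neg_apply]
    by_cases h : d i = d j
    · rw [if_pos h.symm, if_pos h, neg_zero]
    · have hne1 : d i - d j ≠ 0 := sub_ne_zero.mpr h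
      have hne2 : d j - d i ≠ 0 := sub_ne_zero.mpr (Ne.symm h)
      rw [if_neg (fun hh => h hh.symm), if_neg h, hKs]
      field_simp
      ring
  refine ⟨U₀, U₀ * X, d, D₁, hU1, hU2, ?_, ?_, ?_, hspec, ?_⟩
  · rw [transpose_mul, hXanti, ← mul_assoc U₀ᵀ, hU1, one_mul, neg_mul, neg_mul, mul_assoc, hU1, mul_one,
      add_neg_cancel]
  · ext i j
    simp only [hD₁, transpose_apply, of_apply]
    by_cases h : d i = d j
    · rw [if_pos h.symm, if_pos h, hKs]
    · rw [if_neg (fun hh => h hh.symm), if_neg h]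
  · intro i j hij; simp [hD₁, hij]
  · have key : X * Matrix.diagonal d - Matrix.diagonal d * X + D₁ = K := by
      ext i j
      simp only [Matrix.sub_apply, Matrix.add_apply, Matrix.mul_diagonal, Matrix.diagonal_mul,
        hX, hD₁, of_apply]
      by_cases h : d i = d j
      · simp [h]
      · have hne : d j - d i ≠ 0 := sub_ne_zero.mpr (Ne.symm h)
        rw [if_neg h, if_neg h]
        field_simp
        ring
    have hH'eq : H' = U₀ * K * U₀ᵀ := by
      rw [hK, ← mul_assoc, ← mul_assoc, hU2, one_mul, mul_assoc, hU2, mul_one]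
    rw [hH'eq, ← key]
    rw [transpose_mul, hXanti]
    rw [show U₀ * (X * Matrix.diagonal d - Matrix.diagonal d * X + D₁) * U₀ᵀ
      = U₀ * (X * Matrix.diagonal d) * U₀ᵀ - U₀ * (Matrix.diagonal d * X) * U₀ᵀ
        + U₀ * D₁ * U₀ᵀ by noncomm_ring]
    noncomm_ring
end

section
/- For the 3-dimensional ℝ-algebra 𝒜 = (ℝ ⊕ ℝ) + ℝδ with relations δ² = 0 and δ(x,y) = (y,x)δ = xδ, and the involution fixing δ and swapping (x,y) ↦ (y,x): an element of the form aδ (a ∈ ℝ) is self-adjoint, and two elements aδ, bδ are unitarily similar in 𝒜 (i.e. u (aδ) u* = bδ with u* u = 1) if and only if a and b have the same sign (both positive, both negative, or both zero). -/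
/-- Multiplication in the 3-dimensional algebra `(ℝ ⊕ ℝ) + ℝδ`, where an element
`(x, y) + aδ` is encoded as `(x, y, a)`, with relations `δ² = 0` and
`δ(x,y) = (y,x)δ = xδ`. -/
def mul3 (p q : ℝ × ℝ × ℝ) : ℝ × ℝ × ℝ :=
  (p.1 * q.1, p.2.1 * q.2.1, p.2.1 * q.2.2 + p.2.2 * q.1)

/-- The involution on `(ℝ ⊕ ℝ) + ℝδ` fixing `δ` and swapping `(x, y) ↦ (y, x)`. -/
def star3 (p : ℝ × ℝ × ℝ) : ℝ × ℝ × ℝ := (p.2.1, p.1, p.2.2)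

lemma sylvester_aux {a b : ℝ} (ha : a ≠ 0) (hab : 0 < b / a) :
    ∃ u : ℝ × ℝ × ℝ, mul3 (star3 u) u = (1, 1, 0) ∧
      mul3 (mul3 u (0, 0, a)) (star3 u) = (0, 0, b) := by
  refine ⟨⟨Real.sqrt (a / b), Real.sqrt (b / a), 0⟩, ?_, ?_⟩ <;>
    simp only [mul3, star3, Prod.mk.injEq]
  · have hba : 0 < a / b := by
      rw [div_pos_iff] at hab ⊢; tauto
    have h1 : Real.sqrt (b / a) * Real.sqrt (a / b) = 1 := by
      rw [← Real.sqrt_mul hab.le, div_mul_div_comm, mul_comm b a,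
        div_self (mul_ne_zero ha (fun h => by simp [h] at hab)), Real.sqrt_one]
    refine ⟨h1, ?_, by ring⟩
    rw [mul_comm]; exact h1
  · have h2 : Real.sqrt (b / a) * Real.sqrt (b / a) = b / a :=
      Real.mul_self_sqrt hab.le
    refine ⟨by ring, by ring, ?_⟩
    field_simp
    have e : a * (b / a) = b := by field_simp
    linear_combination a * h2 + e

theorem sylvester_in_three_dim_algebra (a b : ℝ) :
    star3 ((0 : ℝ), (0 : ℝ), a) = ((0 : ℝ), (0 : ℝ), a) ∧
    ((∃ u : ℝ × ℝ × ℝ, mul3 (star3 u) u = (1, 1, 0) ∧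
        mul3 (mul3 u (0, 0, a)) (star3 u) = (0, 0, b)) ↔
      (0 < a ∧ 0 < b) ∨ (a < 0 ∧ b < 0) ∨ (a = 0 ∧ b = 0)) := by
  constructor
  · rfl
  constructor
  · rintro ⟨⟨x, y, c⟩, hu, hb⟩
    simp only [mul3, star3, Prod.mk.injEq] at hu hb
    obtain ⟨hxy, -, -⟩ := hu
    obtain ⟨-, -, hb⟩ := hb
    have hy : y ≠ 0 := fun h => by simp [h] at hxy
    have hb' : b = a * y ^ 2 := by ring_nf; ring_nf at hb; linarith
    rcases lt_trichotomy a 0 with ha | ha | ha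
    · exact Or.inr (Or.inl ⟨ha, hb' ▸ mul_neg_of_neg_of_pos ha (by positivity)⟩)
    · exact Or.inr (Or.inr ⟨ha, by simp [hb', ha]⟩)
    · exact Or.inl ⟨ha, hb' ▸ mul_pos ha (by positivity)⟩
  · rintro (⟨ha, hb⟩ | ⟨ha, hb⟩ | ⟨ha, hb⟩)
    · exact sylvester_aux ha.ne' (div_pos hb ha)
    · exact sylvester_aux ha.ne (div_pos_of_neg_of_neg hb ha)
    · exact ⟨(1, 1, 0), by norm_num [mul3, star3], by norm_num [mul3, star3, ha, hb]⟩
end
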